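/- Let p ∈ (1,∞). For each fixed y ∈ (0,1), the map a ↦ G_a(y) is a continuous function of a on (0,∞). -/

import Mathlib

/-!
Fix `y₀ ∈ (0,1)` and `a > 0`. For `b > 0`, the difference `G b - G a` vanishes at `y = 1`, and
on `[y₀, 1]` its derivative is bounded by `M |1/b - 1/a| + K |G b - G a|`: the dependence of
`F` on the parameter is `O(|1/b - 1/a|)` uniformly in `w ≥ 0`, and partial fractions in `w`
show that `w ↦ F_a(y, w)` is Lipschitz on `w ≥ 0`, uniformly in `y ∈ [y₀, 1]`, so no a priori
bound on the solutions is needed. Grönwall's inequality, run from `y = 1` down to `y₀`, gives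
`|G b y₀ - G a y₀| ≤ gronwallBound 0 K (M |1/b - 1/a|) (1 - y₀)`, which tends to `0` as `b → a`.
-/

open Set Real Filter MeasureTheory

/-- `F_a(y,w)` from the paper (with parameter `p`). -/
noncomputable def Fa (p a y w : ℝ) : ℝ :=
  (8*p*(1/a + 2*y) + (2*p/a + 4*(3*p - 2)*y + 2*(p - 1)*y*w)*w) / (y^2 * (4 + (p - 1)*w))

/-- `G` is the family `a ↦ G_a` of solutions of `G_a' = -F_a(y, G_a)` on `(0,1)`
with `G_a(1) = 0`: each `G_a` is continuous on `(0,1]`, positive on `(0,1)` and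
strictly decreasing on `(0,1]`. -/
def IsGFamily (p : ℝ) (G : ℝ → ℝ → ℝ) : Prop :=
  ∀ a : ℝ, 0 < a →
    ContinuousOn (G a) (Set.Ioc 0 1) ∧
    G a 1 = 0 ∧
    (∀ y ∈ Set.Ioo (0:ℝ) 1, HasDerivAt (G a) (-(Fa p a y (G a y))) y) ∧
    (∀ y ∈ Set.Ioo (0:ℝ) 1, 0 < G a y) ∧
    StrictAntiOn (G a) (Set.Ioc 0 1)

open Topology

theorem continuous_gronwallBound (K ε : ℝ) :
    Continuous fun q : ℝ × ℝ => gronwallBound q.1 K ε q.2 := by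
  unfold gronwallBound
  split_ifs <;> fun_prop

theorem norm_le_gronwallBound_of_norm_deriv_left_le {E : Type*} [NormedAddCommGroup E]
    [NormedSpace ℝ E] {f f' : ℝ → E} {K ε a b : ℝ} (hf : ContinuousOn f (Icc a b))
    (hf' : ∀ x ∈ Ioo a b, HasDerivAt f (f' x) x)
    (bound : ∀ x ∈ Ioo a b, ‖f' x‖ ≤ K * ‖f x‖ + ε) :
    ∀ x ∈ Icc a b, ‖f x‖ ≤ gronwallBound ‖f b‖ K ε (b - x) := by
  intro x hx
  rcases hx.2.eq_or_lt with rfl | hxb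
  · rw [sub_self, gronwallBound_x0]
  -- Reflect by `t ↦ -t` to use the rightward inequality on `[x, c]`, then let `c → b⁻`.
  have hsub : Ioo x b ⊆ Icc a b := Ioo_subset_Icc_self.trans (Icc_subset_Icc_left hx.1)
  have hbefore : ∀ c ∈ Ioo x b, ‖f x‖ ≤ gronwallBound ‖f c‖ K ε (c - x) := by
    intro c hc
    have hIoo : ∀ t ∈ Ico (-c) (-x), -t ∈ Ioo a b := fun t ht =>
      ⟨by linarith [hx.1, ht.2], by linarith [ht.1, hc.2]⟩
    have hreflect := norm_le_gronwallBound_of_norm_deriv_right_le (f := fun t => f (-t))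
      (f' := fun t => (-1 : ℝ) • f' (-t)) (a := -c) (b := -x)
      (hf.comp continuousOn_neg fun t ht => ⟨by linarith [hx.1, ht.2], by linarith [ht.1, hc.2]⟩)
      (fun t ht => ((hf' _ (hIoo t ht)).scomp t (hasDerivAt_neg t)).hasDerivWithinAt) le_rfl
      (fun t ht => by simpa using bound _ (hIoo t ht)) (-x) ⟨by linarith [hc.1], le_rfl⟩
    simpa [sub_eq_add_neg, add_comm] using hreflect
  have hfb : Tendsto f (𝓝[<] b) (𝓝 (f b)) :=
    (hf b ⟨hx.1.trans hxb.le, le_rfl⟩).mono_of_mem_nhdsWithin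
      (mem_of_superset (Ioo_mem_nhdsLT hxb) hsub)
  have hlim : Tendsto (fun c => gronwallBound ‖f c‖ K ε (c - x)) (𝓝[<] b)
      (𝓝 (gronwallBound ‖f b‖ K ε (b - x))) :=
    (continuous_gronwallBound K ε).continuousAt.tendsto.comp
      (hfb.norm.prodMk_nhds ((tendsto_nhdsWithin_of_tendsto_nhds tendsto_id).sub_const x))
  exact ge_of_tendsto hlim (eventually_of_mem (Ioo_mem_nhdsLT hxb) hbefore)

lemma Fa_sub_Fa_param (p a b y w : ℝ) :
    Fa p a y w - Fa p b y w = 2*p*(4 + w)*(1/a - 1/b) / (y^2 * (4 + (p - 1)*w)) := by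
  rw [Fa, Fa, div_sub_div_same]
  ring_nf

lemma abs_Fa_sub_Fa_param_le {p a b y₀ y w : ℝ} (hp : 1 < p) (hy₀ : 0 < y₀) (hy : y₀ ≤ y)
    (hw : 0 ≤ w) :
    |Fa p a y w - Fa p b y w| ≤ 2*p / (min 1 (p - 1) * y₀^2) * |1/a - 1/b| := by
  have hq : 0 < p - 1 := by linarith
  have hy' : 0 < y := hy₀.trans_le hy
  have hden : min 1 (p - 1) * (4 + w) * y₀^2 ≤ y^2 * (4 + (p - 1)*w) := by
    have h1 : min 1 (p - 1) * (4 + w) ≤ 4 + (p - 1)*w := by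
      nlinarith [min_le_left 1 (p - 1), min_le_right 1 (p - 1)]
    have h2 : y₀^2 ≤ y^2 := by gcongr
    nlinarith [mul_le_mul h1 h2 (by positivity) (by positivity)]
  rw [Fa_sub_Fa_param, abs_div, abs_mul, abs_of_pos (by positivity : 0 < 2*p*(4 + w)),
    abs_of_pos (by positivity : 0 < y^2 * (4 + (p - 1)*w)), div_mul_eq_mul_div,
    div_le_div_iff₀ (by positivity) (by positivity)]
  nlinarith [mul_le_mul_of_nonneg_left hden (by positivity : 0 ≤ 2*p*|1/a - 1/b|)]

/-- Partial fractions in `w`: `Fa p a y w = 2w/y + (2p/a + (12p-16)y)/((p-1)y²)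
+ FaPoleCoeff p a y / (y²(4 + (p-1)w))`. -/
noncomputable def FaPoleCoeff (p a y : ℝ) : ℝ :=
  8*p*(1/a + 2*y) - 4*(2*p/a + (12*p - 16)*y) / (p - 1)

lemma Fa_sub_Fa_arg {p a y w₁ w₂ : ℝ} (hp : 1 < p) (hy : 0 < y) (hw₁ : 0 ≤ w₁) (hw₂ : 0 ≤ w₂) :
    Fa p a y w₁ - Fa p a y w₂ = (w₁ - w₂) * (2/y - (p - 1) * FaPoleCoeff p a y /
      (y^2 * ((4 + (p - 1)*w₁) * (4 + (p - 1)*w₂)))) := by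
  have hq : 0 < p - 1 := by linarith
  have h₁ : 4 + (p - 1)*w₁ ≠ 0 := by positivity
  have h₂ : 4 + (p - 1)*w₂ ≠ 0 := by positivity
  have hp1 : p - 1 ≠ 0 := by linarith
  rw [Fa, Fa, FaPoleCoeff]
  field_simp
  ring

lemma abs_Fa_sub_Fa_arg_le {p a y w₁ w₂ : ℝ} (hp : 1 < p) (hy : 0 < y) (hw₁ : 0 ≤ w₁)
    (hw₂ : 0 ≤ w₂) :
    |Fa p a y w₁ - Fa p a y w₂| ≤
      (2/y + (p - 1) * |FaPoleCoeff p a y| / (16*y^2)) * |w₁ - w₂| := by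
  have hq : 0 < p - 1 := by linarith
  have hD : 16*y^2 ≤ y^2 * ((4 + (p - 1)*w₁) * (4 + (p - 1)*w₂)) := by
    have : 16 ≤ (4 + (p - 1)*w₁) * (4 + (p - 1)*w₂) := by
      nlinarith [mul_nonneg (mul_nonneg hq.le hw₁) (mul_nonneg hq.le hw₂),
        mul_nonneg hq.le hw₁, mul_nonneg hq.le hw₂]
    nlinarith [sq_nonneg y]
  rw [Fa_sub_Fa_arg hp hy hw₁ hw₂, abs_mul, mul_comm]
  gcongr
  calc |2/y - (p - 1) * FaPoleCoeff p a y / (y^2 * ((4 + (p - 1)*w₁) * (4 + (p - 1)*w₂)))|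
      ≤ |2/y| + |(p - 1) * FaPoleCoeff p a y / (y^2 * ((4 + (p - 1)*w₁) * (4 + (p - 1)*w₂)))| :=
        abs_sub _ _
    _ ≤ 2/y + (p - 1) * |FaPoleCoeff p a y| / (16*y^2) := by
        rw [abs_of_pos (by positivity : 0 < 2/y), abs_div, abs_mul, abs_of_pos hq,
          abs_of_pos (by positivity : 0 < y^2 * ((4 + (p - 1)*w₁) * (4 + (p - 1)*w₂)))]
        gcongr

lemma exists_abs_Fa_sub_Fa_arg_le {p y₀ : ℝ} (hp : 1 < p) (hy₀ : 0 < y₀) (a : ℝ) :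
    ∃ K, ∀ y ∈ Icc y₀ 1, ∀ w₁ w₂, 0 ≤ w₁ → 0 ≤ w₂ →
      |Fa p a y w₁ - Fa p a y w₂| ≤ K * |w₁ - w₂| := by
  have hne : ∀ y ∈ Icc y₀ 1, y ≠ 0 := fun y hy => (hy₀.trans_le hy.1).ne'
  have hcont : ContinuousOn (fun y => 2/y + (p - 1) * |FaPoleCoeff p a y| / (16*y^2))
      (Icc y₀ 1) := by
    unfold FaPoleCoeff
    fun_prop (disch := first | exact hne | (intro y hy; have := hne y hy; positivity))
  obtain ⟨K, hK⟩ := isCompact_Icc.exists_bound_of_continuousOn hcont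
  exact ⟨K, fun y hy w₁ w₂ hw₁ hw₂ => (abs_Fa_sub_Fa_arg_le hp (hy₀.trans_le hy.1) hw₁ hw₂).trans
    (mul_le_mul_of_nonneg_right ((le_abs_self _).trans (hK y hy)) (abs_nonneg _))⟩

lemma IsGFamily.nonneg {p : ℝ} {G : ℝ → ℝ → ℝ} (hG : IsGFamily p G) {a y : ℝ} (ha : 0 < a)
    (hy : y ∈ Ioc 0 1) : 0 ≤ G a y := by
  obtain ⟨-, h₁, -, hpos, -⟩ := hG a ha
  rcases hy.2.eq_or_lt with rfl | hy1
  · exact h₁.ge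
  · exact (hpos y ⟨hy.1, hy1⟩).le

lemma IsGFamily.abs_sub_le {p : ℝ} (hp : 1 < p) {G : ℝ → ℝ → ℝ} (hG : IsGFamily p G)
    {y₀ a b K : ℝ} (hy₀ : y₀ ∈ Ioo 0 1) (ha : 0 < a) (hb : 0 < b)
    (hK : ∀ y ∈ Icc y₀ 1, ∀ w₁ w₂, 0 ≤ w₁ → 0 ≤ w₂ →
      |Fa p a y w₁ - Fa p a y w₂| ≤ K * |w₁ - w₂|) :
    |G b y₀ - G a y₀| ≤
      gronwallBound 0 K (2*p / (min 1 (p - 1) * y₀^2) * |1/b - 1/a|) (1 - y₀) := by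
  obtain ⟨hcb, hb1, hdb, -, -⟩ := hG b hb
  obtain ⟨hca, ha1, hda, -, -⟩ := hG a ha
  have hIcc : Icc y₀ 1 ⊆ Ioc 0 1 := Icc_subset_Ioc_iff hy₀.2.le |>.2 ⟨hy₀.1, le_rfl⟩
  have hIoo : Ioo y₀ 1 ⊆ Ioo 0 1 := Ioo_subset_Ioo_left hy₀.1.le
  have key := norm_le_gronwallBound_of_norm_deriv_left_le (a := y₀) (b := 1)
    (f := fun y => G b y - G a y) (f' := fun y => -Fa p b y (G b y) - -Fa p a y (G a y))
    ((hcb.mono hIcc).sub (hca.mono hIcc))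
    (fun y hy => (hdb y (hIoo hy)).sub (hda y (hIoo hy)))
    (fun y hy => by
      have hyIcc := Ioo_subset_Icc_self hy
      have hwb := hG.nonneg hb (hIcc hyIcc)
      have hwa := hG.nonneg ha (hIcc hyIcc)
      simp only [Real.norm_eq_abs, neg_sub_neg]
      calc |Fa p a y (G a y) - Fa p b y (G b y)|
          = |(Fa p b y (G b y) - Fa p a y (G b y)) + (Fa p a y (G b y) - Fa p a y (G a y))| := by
            rw [← abs_neg]; ring_nf
        _ ≤ |Fa p b y (G b y) - Fa p a y (G b y)| + |Fa p a y (G b y) - Fa p a y (G a y)| :=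
            abs_add_le _ _
        _ ≤ 2*p / (min 1 (p - 1) * y₀^2) * |1/b - 1/a| + K * |G b y - G a y| :=
            add_le_add (abs_Fa_sub_Fa_param_le hp hy₀.1 hy.1.le hwb)
              (hK y hyIcc _ _ hwb hwa)
        _ = _ := add_comm _ _)
    y₀ (left_mem_Icc.2 hy₀.2.le)
  simpa [hb1, ha1] using key

theorem G_continuous_in_a (p : ℝ) (hp : 1 < p) (G : ℝ → ℝ → ℝ)
    (hG : IsGFamily p G) :
    ∀ y ∈ Set.Ioo (0:ℝ) 1, ContinuousOn (fun a => G a y) (Set.Ioi 0) := by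
  intro y₀ hy₀ a ha
  obtain ⟨K, hK⟩ := exists_abs_Fa_sub_Fa_arg_le hp hy₀.1 a
  set M := 2*p / (min 1 (p - 1) * y₀^2)
  have hbound : ∀ᶠ b in 𝓝[Ioi 0] a,
      dist (G b y₀) (G a y₀) ≤ gronwallBound 0 K (M * |1/b - 1/a|) (1 - y₀) :=
    eventually_mem_nhdsWithin.mono fun b hb => hG.abs_sub_le hp hy₀ ha hb hK
  have hlim : Tendsto (fun b => gronwallBound 0 K (M * |1/b - 1/a|) (1 - y₀)) (𝓝[Ioi 0] a)
      (𝓝 0) := by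
    have hcont : ContinuousAt (fun b => gronwallBound 0 K (M * |1/b - 1/a|) (1 - y₀)) a :=
      (gronwallBound_continuous_ε 0 K (1 - y₀)).continuousAt.comp
        (by fun_prop (disch := exact (ne_of_gt ha)))
    simpa [gronwallBound_ε0_δ0] using hcont.tendsto.mono_left nhdsWithin_le_nhds
  exact tendsto_iff_dist_tendsto_zero.2
    (squeeze_zero' (Eventually.of_forall fun _ => dist_nonneg) hbound hlim)
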